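/- Let p ∈ (0, 1) and let (X_k)_{k ≥ 1} be an i.i.d. sequence of Bernoulli(p) random variables with values in {0, 1}. For each ε > 0 and N ≥ 1 define μ̂_N = (1/(2N))·Σ_{k=1}^{2N} X_k, σ̂_N = sqrt((1/(2N))·Σ_{k=1}^{2N} (X_k − μ̂_N)²), and Y_N(ε) = (X₁ − μ̂_N)/(σ̂_N + ε). Then for each x ∈ {0, 1}, lim_{ε→0⁺} lim_{N→∞} E[Y_N(ε) | X₁ = x] = (x − p)/sqrt(p·(1 − p)), where the conditional expectation given an event A with P(A) > 0 is E[Y_N·1_A]/P(A). -/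

import Mathlib

open MeasureTheory ProbabilityTheory Filter Topology Finset

/-!
By the strong law of large numbers the sample mean `μ̂_N` tends to `p` almost surely, and since
`X_k² = X_k` the sample variance equals `μ̂_N - μ̂_N²`, so `σ̂_N → √(p(1-p))` almost surely.
For fixed `ε > 0` the advantage is bounded by `1/ε`, so bounded convergence on the event
`{X₁ = x}` gives the inner limit `(x - p) / (√(p(1-p)) + ε)`, which tends to
`(x - p) / √(p(1-p))` as `ε → 0⁺`.
-/

lemma setOf_eq_zero_eq_compl_of_forall_eq_zero_or_eq_one {Ω : Type*} {X : Ω → ℝ}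
    (h01 : ∀ ω, X ω = 0 ∨ X ω = 1) : {ω | X ω = 0} = {ω | X ω = 1}ᶜ := by
  ext ω
  rcases h01 ω with h | h <;> simp [h]

section ZeroOne

variable {Ω Ω' : Type*} [MeasurableSpace Ω] [MeasurableSpace Ω'] {μ : Measure Ω} {ν : Measure Ω'}
  {X : Ω → ℝ}

lemma measurableSet_setOf_eq_one (hX : Measurable X) : MeasurableSet {ω | X ω = 1} :=
  hX (measurableSet_singleton 1)

lemma map_eq_of_forall_eq_zero_or_eq_one (hX : Measurable X) (h01 : ∀ ω, X ω = 0 ∨ X ω = 1) :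
    μ.map X = μ {ω | X ω = 1} • Measure.dirac 1 + μ {ω | X ω = 1}ᶜ • Measure.dirac 0 := by
  have hE := measurableSet_setOf_eq_one hX
  have hconst (c : ℝ) (s : Set Ω) (hs : MeasurableSet s) (hc : ∀ ω ∈ s, X ω = c) :
      (μ.restrict s).map X = μ s • Measure.dirac c := by
    rw [Measure.map_congr (g := fun _ ↦ c) ((ae_restrict_iff' hs).2 (.of_forall hc)),
      Measure.map_const, Measure.restrict_apply_univ]
  conv_lhs => rw [← Measure.restrict_add_restrict_compl (μ := μ) hE]
  rw [Measure.map_add _ _ hX, hconst 1 _ hE fun ω hω ↦ hω,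
    hconst 0 _ hE.compl fun ω hω ↦ (h01 ω).resolve_right hω]

lemma identDistrib_of_forall_eq_zero_or_eq_one [IsProbabilityMeasure μ] [IsProbabilityMeasure ν]
    {Y : Ω' → ℝ} (hX : Measurable X) (hY : Measurable Y) (hX01 : ∀ ω, X ω = 0 ∨ X ω = 1)
    (hY01 : ∀ ω, Y ω = 0 ∨ Y ω = 1) (h : μ {ω | X ω = 1} = ν {ω | Y ω = 1}) :
    IdentDistrib X Y μ ν where
  aemeasurable_fst := hX.aemeasurable
  aemeasurable_snd := hY.aemeasurable
  map_eq := by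
    rw [map_eq_of_forall_eq_zero_or_eq_one hX hX01, map_eq_of_forall_eq_zero_or_eq_one hY hY01,
      prob_compl_eq_one_sub (measurableSet_setOf_eq_one hX),
      prob_compl_eq_one_sub (measurableSet_setOf_eq_one hY), h]

lemma integral_eq_measureReal_of_forall_eq_zero_or_eq_one (hX : Measurable X)
    (h01 : ∀ ω, X ω = 0 ∨ X ω = 1) : ∫ ω, X ω ∂μ = μ.real {ω | X ω = 1} := by
  rw [← integral_indicator_one (measurableSet_setOf_eq_one hX)]
  congr 1 with ω
  rcases h01 ω with h | h <;> simp [h]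

end ZeroOne

noncomputable def sampleMean (x : ℕ → ℝ) (n : ℕ) : ℝ := (n : ℝ)⁻¹ * ∑ k ∈ range n, x k

noncomputable def sampleVariance (x : ℕ → ℝ) (n : ℕ) : ℝ :=
  (n : ℝ)⁻¹ * ∑ k ∈ range n, (x k - sampleMean x n) ^ 2

lemma sampleMean_mem_Icc {x : ℕ → ℝ} (hx : ∀ k, x k ∈ Set.Icc 0 1) (n : ℕ) :
    sampleMean x n ∈ Set.Icc 0 1 := by
  rcases Nat.eq_zero_or_pos n with rfl | hn
  · simp [sampleMean]
  have hsum : ∑ k ∈ range n, x k ≤ n := by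
    simpa using sum_le_sum fun k (_ : k ∈ range n) ↦ (hx k).2
  refine ⟨mul_nonneg (by positivity) (sum_nonneg fun k _ ↦ (hx k).1), ?_⟩
  rw [sampleMean, inv_mul_le_one₀ (by positivity)]
  exact hsum

lemma sampleVariance_eq_of_sq_eq_self {x : ℕ → ℝ} (hx : ∀ k, x k ^ 2 = x k) {n : ℕ} (hn : n ≠ 0) :
    sampleVariance x n = sampleMean x n - sampleMean x n ^ 2 := by
  have hn' : (n : ℝ) ≠ 0 := Nat.cast_ne_zero.2 hn
  have hsum : ∑ k ∈ range n, x k = n * sampleMean x n := by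
    rw [sampleMean]; field_simp
  have hexpand : ∀ k, (x k - sampleMean x n) ^ 2 =
      x k - 2 * sampleMean x n * x k + sampleMean x n ^ 2 := fun k ↦ by
    linear_combination hx k
  simp only [sampleVariance, hexpand, sum_add_distrib, sum_sub_distrib, ← mul_sum, sum_const,
    card_range, nsmul_eq_mul, hsum]
  field_simp
  ring

lemma tendsto_sqrt_sampleVariance {x : ℕ → ℝ} (hx : ∀ k, x k ^ 2 = x k) {p : ℝ}
    (hmean : Tendsto (sampleMean x) atTop (𝓝 p)) :
    Tendsto (fun n ↦ √(sampleVariance x n)) atTop (𝓝 √(p * (1 - p))) := by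
  have hvar := hmean.sub (hmean.pow 2)
  rw [show p - p ^ 2 = p * (1 - p) by ring] at hvar
  refine (Real.continuous_sqrt.tendsto _).comp (hvar.congr' ?_)
  filter_upwards [eventually_ne_atTop 0] with n hn
  exact (sampleVariance_eq_of_sq_eq_self hx hn).symm

noncomputable def normalizedAdvantage (x : ℕ → ℝ) (n : ℕ) (ε : ℝ) : ℝ :=
  (x 0 - sampleMean x n) / (√(sampleVariance x n) + ε)

lemma abs_normalizedAdvantage_le {x : ℕ → ℝ} (hx : ∀ k, x k ∈ Set.Icc 0 1) (n : ℕ) {ε : ℝ}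
    (hε : 0 < ε) : |normalizedAdvantage x n ε| ≤ 1 / ε := by
  have hm := sampleMean_mem_Icc hx n
  have hnum : |x 0 - sampleMean x n| ≤ 1 :=
    abs_sub_le_iff.2 ⟨by linarith [(hx 0).2, hm.1], by linarith [(hx 0).1, hm.2]⟩
  rw [normalizedAdvantage, abs_div, abs_of_pos (by positivity : 0 < √(sampleVariance x n) + ε)]
  exact div_le_div₀ zero_le_one hnum hε (le_add_of_nonneg_left (Real.sqrt_nonneg _))

lemma tendsto_normalizedAdvantage {x : ℕ → ℝ} (hx : ∀ k, x k ^ 2 = x k) {p ε : ℝ} (hε : 0 < ε)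
    (hmean : Tendsto (sampleMean x) atTop (𝓝 p)) :
    Tendsto (normalizedAdvantage x · ε) atTop (𝓝 ((x 0 - p) / (√(p * (1 - p)) + ε))) :=
  (tendsto_const_nhds.sub hmean).div
    ((tendsto_sqrt_sampleVariance hx hmean).add tendsto_const_nhds) (by positivity)

lemma tendsto_div_const_add_nhdsGT_zero (a : ℝ) {b : ℝ} (hb : b ≠ 0) :
    Tendsto (fun ε ↦ a / (b + ε)) (𝓝[>] 0) (𝓝 (a / b)) := by
  have hden : Tendsto (b + ·) (𝓝[>] 0) (𝓝 b) := by
    simpa using ((continuous_const_add b).continuousWithinAt (s := Set.Ioi 0) (x := 0)).tendsto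
  exact tendsto_const_nhds.div hden hb

section Probability

variable {Ω : Type*} [MeasurableSpace Ω] {μ : Measure Ω}

lemma ae_tendsto_sampleMean_of_forall_eq_zero_or_eq_one [IsProbabilityMeasure μ] {X : ℕ → Ω → ℝ}
    (hX : ∀ k, Measurable (X k)) (hindep : Pairwise fun i j ↦ IndepFun (X i) (X j) μ)
    (h01 : ∀ k ω, X k ω = 0 ∨ X k ω = 1) (hident : ∀ k, μ {ω | X k ω = 1} = μ {ω | X 0 ω = 1}) :
    ∀ᵐ ω ∂μ, Tendsto (sampleMean (X · ω)) atTop (𝓝 (μ.real {ω | X 0 ω = 1})) := by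
  have hint : Integrable (X 0) μ := by
    refine (integrable_const (1 : ℝ)).mono' (hX 0).aestronglyMeasurable (.of_forall fun ω ↦ ?_)
    rcases h01 0 ω with h | h <;> simp [h]
  filter_upwards [strong_law_ae X hint hindep fun k ↦ identDistrib_of_forall_eq_zero_or_eq_one
    (hX k) (hX 0) (h01 k) (h01 0) (hident k)] with ω hω
  rwa [integral_eq_measureReal_of_forall_eq_zero_or_eq_one (hX 0) (h01 0)] at hω

lemma tendsto_setIntegral_div_of_ae_tendsto [IsFiniteMeasure μ] {F : ℕ → Ω → ℝ} {A : Set Ω}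
    {c C : ℝ} (hF : ∀ n, AEStronglyMeasurable (F n) μ) (hbound : ∀ n ω, |F n ω| ≤ C)
    (hlim : ∀ᵐ ω ∂μ, ω ∈ A → Tendsto (F · ω) atTop (𝓝 c)) (hA : MeasurableSet A)
    (hA0 : μ A ≠ 0) : Tendsto (fun n ↦ (∫ ω in A, F n ω ∂μ) / (μ A).toReal) atTop (𝓝 c) := by
  have hint : Tendsto (fun n ↦ ∫ ω in A, F n ω ∂μ) atTop (𝓝 (∫ _ in A, c ∂μ)) :=
    tendsto_integral_of_dominated_convergence (fun _ ↦ C) (fun n ↦ (hF n).restrict)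
      (integrable_const C) (fun n ↦ .of_forall (hbound n)) ((ae_restrict_iff' hA).2 hlim)
  have hA0' : (μ A).toReal ≠ 0 := ENNReal.toReal_ne_zero.2 ⟨hA0, measure_ne_top μ A⟩
  simpa [setIntegral_const, measureReal_def, hA0'] using hint.div_const (μ A).toReal

lemma tendsto_setIntegral_normalizedAdvantage_div [IsProbabilityMeasure μ] {X : ℕ → Ω → ℝ}
    (hX : ∀ k, Measurable (X k)) (hindep : Pairwise fun i j ↦ IndepFun (X i) (X j) μ)
    (h01 : ∀ k ω, X k ω = 0 ∨ X k ω = 1) (hident : ∀ k, μ {ω | X k ω = 1} = μ {ω | X 0 ω = 1})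
    {x : ℝ} (hx : μ {ω | X 0 ω = x} ≠ 0) {ε : ℝ} (hε : 0 < ε) :
    Tendsto (fun n ↦ (∫ ω in {ω | X 0 ω = x}, normalizedAdvantage (X · ω) n ε ∂μ) /
      (μ {ω | X 0 ω = x}).toReal) atTop
      (𝓝 ((x - μ.real {ω | X 0 ω = 1}) / (√(μ.real {ω | X 0 ω = 1} *
        (1 - μ.real {ω | X 0 ω = 1})) + ε))) := by
  have hIcc (k : ℕ) (ω : Ω) : X k ω ∈ Set.Icc 0 1 := by rcases h01 k ω with h | h <;> simp [h]
  have hsq (k : ℕ) (ω : Ω) : X k ω ^ 2 = X k ω := by rcases h01 k ω with h | h <;> simp [h]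
  refine tendsto_setIntegral_div_of_ae_tendsto (C := 1 / ε) (fun n ↦ ?_)
    (fun n ω ↦ abs_normalizedAdvantage_le (hIcc · ω) n hε) ?_ (hX 0 (measurableSet_singleton x)) hx
  · refine Measurable.aestronglyMeasurable ?_
    simp only [normalizedAdvantage, sampleMean, sampleVariance]
    fun_prop
  · filter_upwards [ae_tendsto_sampleMean_of_forall_eq_zero_or_eq_one hX hindep h01 hident]
      with ω hω (hωx : X 0 ω = x)
    simpa [hωx] using tendsto_normalizedAdvantage (hsq · ω) hε hω

end Probability

/-- The iterated limit `lim_{ε→0⁺} lim_{N→∞} E[Y_N(ε) | X₁ = x] = (x − p)/sqrt(p(1−p))`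
for the group-normalized advantage of i.i.d. Bernoulli(p) rewards. -/
theorem stmt_6 {Ω : Type*} [MeasurableSpace Ω] (μ : Measure Ω) [IsProbabilityMeasure μ]
    (p : ℝ) (hp : p ∈ Set.Ioo (0 : ℝ) 1)
    (X : ℕ → Ω → ℝ) (hXmeas : ∀ k, Measurable (X k))
    (hindep : iIndepFun X μ)
    (hval : ∀ k ω, X k ω = 0 ∨ X k ω = 1)
    (hbern : ∀ k, μ {ω | X k ω = 1} = ENNReal.ofReal p)
    (μhat : ℕ → Ω → ℝ)
    (hμhat : ∀ N ω, μhat N ω = (1 / (2 * N : ℝ)) * ∑ k ∈ Finset.range (2 * N), X k ω)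
    (σhat : ℕ → Ω → ℝ)
    (hσhat : ∀ N ω, σhat N ω =
      Real.sqrt ((1 / (2 * N : ℝ)) * ∑ k ∈ Finset.range (2 * N), (X k ω - μhat N ω) ^ 2))
    (Y : ℝ → ℕ → Ω → ℝ)
    (hY : ∀ ε N ω, Y ε N ω = (X 0 ω - μhat N ω) / (σhat N ω + ε)) :
    ∀ x ∈ ({0, 1} : Set ℝ), ∀ L : ℝ → ℝ,
      (∀ ε > (0 : ℝ),
        Tendsto (fun N => (∫ ω in {ω | X 0 ω = x}, Y ε N ω ∂μ) / (μ {ω | X 0 ω = x}).toReal)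
          atTop (nhds (L ε))) →
      Tendsto L (nhdsWithin 0 (Set.Ioi 0)) (nhds ((x - p) / Real.sqrt (p * (1 - p)))) := by
  intro x hx L hL
  obtain ⟨hp0, hp1⟩ := hp
  obtain rfl : μhat = fun N ω ↦ sampleMean (X · ω) (2 * N) := by
    ext N ω; rw [hμhat, sampleMean]; push_cast; ring
  obtain rfl : σhat = fun N ω ↦ √(sampleVariance (X · ω) (2 * N)) := by
    ext N ω; simp only [hσhat, sampleVariance, one_div, Nat.cast_mul, Nat.cast_ofNat]
  obtain rfl : Y = fun ε N ω ↦ normalizedAdvantage (X · ω) (2 * N) ε := by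
    ext ε N ω; exact hY ε N ω
  have hq : μ.real {ω | X 0 ω = 1} = p := by
    rw [measureReal_def, hbern 0, ENNReal.toReal_ofReal hp0.le]
  have hA : μ {ω | X 0 ω = x} ≠ 0 := by
    rcases hx with rfl | rfl
    · rw [setOf_eq_zero_eq_compl_of_forall_eq_zero_or_eq_one (hval 0),
        prob_compl_eq_one_sub (measurableSet_setOf_eq_one (hXmeas 0)), hbern 0]
      simpa [tsub_eq_zero_iff_le] using hp1
    · simpa [hbern 0] using hp0
  have hL_eq : ∀ ε > 0, L ε = (x - p) / (√(p * (1 - p)) + ε) := fun ε hε ↦ by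
    refine tendsto_nhds_unique (hL ε hε) ?_
    have h := tendsto_setIntegral_normalizedAdvantage_div hXmeas (fun i j hij ↦ hindep.indepFun hij)
      hval (fun k ↦ (hbern k).trans (hbern 0).symm) hA hε
    rw [hq] at h
    exact h.comp (tendsto_id.const_mul_atTop' two_pos)
  have hs : √(p * (1 - p)) ≠ 0 := (Real.sqrt_pos.2 (mul_pos hp0 (by linarith))).ne'
  exact (tendsto_div_const_add_nhdsGT_zero (x - p) hs).congr'
    (eventually_nhdsWithin_of_forall fun ε hε ↦ (hL_eq ε hε).symm)
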